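/- arXiv:2512.08187 — 4 statements merged into one kernel-verified Lean document; each statement's English description precedes it below -/
import Mathlib

section
/- Let M = [[a,b],[c,d]] ∈ SL(2,ℤ) and define f(M) = (a+d)c - bd(c²-1) - 3c if c is odd, and f(M) = (a+d)c - bd(c²-1) + 3d - 3 - 3cd if c is even. Then f(M) ≡ 0 (mod 4) if and only if M is congruent mod 4 to one of the twelve matrices: [[1,0],[0,1]], [[1,2],[2,1]], [[-1,0],[2,-1]], [[-1,2],[0,-1]], [[2,1],[1,1]], [[2,-1],[-1,1]], [[0,1],[-1,-1]], [[0,-1],[1,-1]], [[1,1],[1,2]], [[1,-1],[-1,2]], [[-1,1],[-1,0]], [[-1,-1],[1,0]]. -/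
abbrev SL2Z := Matrix.SpecialLinearGroup (Fin 2) ℤ

/-- Knopp's exponent for the eta multiplier system. -/
def f (M : SL2Z) : ℤ :=
  if Odd (M.1 1 0) then
    (M.1 0 0 + M.1 1 1) * M.1 1 0 - M.1 0 1 * M.1 1 1 * ((M.1 1 0) ^ 2 - 1) - 3 * M.1 1 0
  else
    (M.1 0 0 + M.1 1 1) * M.1 1 0 - M.1 0 1 * M.1 1 1 * ((M.1 1 0) ^ 2 - 1)
      + 3 * M.1 1 1 - 3 - 3 * M.1 1 0 * M.1 1 1

/-- Entrywise congruence of `M` to `[[p,q],[r,s]]` mod `n`. -/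
def MCong (n : ℤ) (M : SL2Z) (p q r s : ℤ) : Prop :=
  M.1 0 0 ≡ p [ZMOD n] ∧ M.1 0 1 ≡ q [ZMOD n] ∧ M.1 1 0 ≡ r [ZMOD n] ∧ M.1 1 1 ≡ s [ZMOD n]

set_option maxHeartbeats 2000000 in
set_option synthInstance.maxSize 4000 in
set_option synthInstance.maxHeartbeats 1000000 in
lemma zmod4_key (A B C D : ZMod 4) (hdet : A * D - B * C = 1) (hC : C = 1 ∨ C = 3) :
    (A + D) * C - B * D * (C ^ 2 - 1) - 3 * C = 0 ↔
    ((A = 1 ∧ B = 0 ∧ C = 0 ∧ D = 1) ∨ (A = 1 ∧ B = 2 ∧ C = 2 ∧ D = 1) ∨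
    (A = -1 ∧ B = 0 ∧ C = 2 ∧ D = -1) ∨ (A = -1 ∧ B = 2 ∧ C = 0 ∧ D = -1) ∨
    (A = 2 ∧ B = 1 ∧ C = 1 ∧ D = 1) ∨ (A = 2 ∧ B = -1 ∧ C = -1 ∧ D = 1) ∨
    (A = 0 ∧ B = 1 ∧ C = -1 ∧ D = -1) ∨ (A = 0 ∧ B = -1 ∧ C = 1 ∧ D = -1) ∨
    (A = 1 ∧ B = 1 ∧ C = 1 ∧ D = 2) ∨ (A = 1 ∧ B = -1 ∧ C = -1 ∧ D = 2) ∨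
    (A = -1 ∧ B = 1 ∧ C = -1 ∧ D = 0) ∨ (A = -1 ∧ B = -1 ∧ C = 1 ∧ D = 0)) := by
  revert hdet hC; revert A B C D; decide

set_option maxHeartbeats 2000000 in
set_option synthInstance.maxSize 4000 in
set_option synthInstance.maxHeartbeats 1000000 in
lemma zmod4_key' (A B C D : ZMod 4) (hdet : A * D - B * C = 1) (hC : ¬(C = 1 ∨ C = 3)) :
    (A + D) * C - B * D * (C ^ 2 - 1) + 3 * D - 3 - 3 * C * D = 0 ↔
    ((A = 1 ∧ B = 0 ∧ C = 0 ∧ D = 1) ∨ (A = 1 ∧ B = 2 ∧ C = 2 ∧ D = 1) ∨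
    (A = -1 ∧ B = 0 ∧ C = 2 ∧ D = -1) ∨ (A = -1 ∧ B = 2 ∧ C = 0 ∧ D = -1) ∨
    (A = 2 ∧ B = 1 ∧ C = 1 ∧ D = 1) ∨ (A = 2 ∧ B = -1 ∧ C = -1 ∧ D = 1) ∨
    (A = 0 ∧ B = 1 ∧ C = -1 ∧ D = -1) ∨ (A = 0 ∧ B = -1 ∧ C = 1 ∧ D = -1) ∨
    (A = 1 ∧ B = 1 ∧ C = 1 ∧ D = 2) ∨ (A = 1 ∧ B = -1 ∧ C = -1 ∧ D = 2) ∨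
    (A = -1 ∧ B = 1 ∧ C = -1 ∧ D = 0) ∨ (A = -1 ∧ B = -1 ∧ C = 1 ∧ D = 0)) := by
  revert hdet hC; revert A B C D; decide

theorem stmt5 (M : SL2Z) :
    f M ≡ 0 [ZMOD 4] ↔
      MCong 4 M 1 0 0 1 ∨ MCong 4 M 1 2 2 1 ∨
      MCong 4 M (-1) 0 2 (-1) ∨ MCong 4 M (-1) 2 0 (-1) ∨
      MCong 4 M 2 1 1 1 ∨ MCong 4 M 2 (-1) (-1) 1 ∨
      MCong 4 M 0 1 (-1) (-1) ∨ MCong 4 M 0 (-1) 1 (-1) ∨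
      MCong 4 M 1 1 1 2 ∨ MCong 4 M 1 (-1) (-1) 2 ∨
      MCong 4 M (-1) 1 (-1) 0 ∨ MCong 4 M (-1) (-1) 1 0 := by
  have hmod : ∀ x y : ℤ, x ≡ y [ZMOD 4] ↔ ((x : ZMod 4) = (y : ZMod 4)) :=
    fun x y => (ZMod.intCast_eq_intCast_iff x y 4).symm
  have hdet : M.1 0 0 * M.1 1 1 - M.1 0 1 * M.1 1 0 = 1 := by
    have := M.2
    rwa [Matrix.det_fin_two] at this
  set a := M.1 0 0 with ha
  set b := M.1 0 1 with hb
  set c := M.1 1 0 with hc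
  set d := M.1 1 1 with hd
  have hdet4 : (a : ZMod 4) * d - b * c = 1 := by
    have := congrArg (fun x : ℤ => (x : ZMod 4)) hdet
    push_cast at this
    exact this
  have hoddc : Odd c ↔ ((c : ZMod 4) = 1 ∨ (c : ZMod 4) = 3) := by
    rw [Int.odd_iff]
    have h1 : ((c : ZMod 4) = ((1:ℤ) : ZMod 4)) ↔ c % 4 = 1 := by
      rw [ZMod.intCast_eq_intCast_iff]
      constructor
      · intro h; have := h.symm; simp [Int.ModEq] at this ⊢; omega
      · intro h; show c % _ = _; push_cast; omega
    have h3 : ((c : ZMod 4) = ((3:ℤ) : ZMod 4)) ↔ c % 4 = 3 := by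
      rw [ZMod.intCast_eq_intCast_iff]
      constructor
      · intro h; have := h.symm; simp [Int.ModEq] at this ⊢; omega
      · intro h; show c % _ = _; push_cast; omega
    push_cast at h1 h3
    rw [h1, h3]
    omega
  unfold f MCong
  simp only [hmod]
  push_cast
  by_cases hco : Odd c
  · rw [if_pos hco]
    rw [hoddc] at hco
    exact zmod4_key _ _ _ _ hdet4 hco
  · rw [if_neg hco]
    rw [hoddc] at hco
    exact zmod4_key' _ _ _ _ hdet4 hco
end

section
/- Let M = [[a,b],[c,d]] ∈ SL(2,ℤ) with c ≡ 0 (mod 3) and define f(M) = (a+d)c - bd(c²-1) - 3c if c is odd, f(M) = (a+d)c - bd(c²-1) + 3d - 3 - 3cd if c is even. If f(M) ≡ 0 (mod 3), then M ≡ ±[[1,0],[0,1]] (mod 3). -/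
lemma keyOdd (A B C D : ZMod 3) (h1 : A * D - B * C = 1) (h2 : C = 0)
    (h3 : (A + D) * C - B * D * (C ^ 2 - 1) - 3 * C = 0) :
    (A = 1 ∧ B = 0 ∧ D = 1) ∨ (A = -1 ∧ B = 0 ∧ D = -1) := by
  revert h1 h2 h3; revert A B C D; decide

lemma keyEven (A B C D : ZMod 3) (h1 : A * D - B * C = 1) (h2 : C = 0)
    (h3 : (A + D) * C - B * D * (C ^ 2 - 1) + 3 * D - 3 - 3 * C * D = 0) :
    (A = 1 ∧ B = 0 ∧ D = 1) ∨ (A = -1 ∧ B = 0 ∧ D = -1) := by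
  revert h1 h2 h3; revert A B C D; decide

theorem stmt6 (M : SL2Z) (hc : M.1 1 0 ≡ 0 [ZMOD 3]) (hf : f M ≡ 0 [ZMOD 3]) :
    MCong 3 M 1 0 0 1 ∨ MCong 3 M (-1) 0 0 (-1) := by
  have hdet : M.1 0 0 * M.1 1 1 - M.1 0 1 * M.1 1 0 = 1 := by
    have h := M.2
    rw [Matrix.det_fin_two] at h
    linarith
  set a := M.1 0 0 with ha
  set b := M.1 0 1 with hb
  set c := M.1 1 0 with hcc
  set d := M.1 1 1 with hd
  have h1 : (a : ZMod 3) * d - b * c = 1 := by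
    have := congrArg (fun x : ℤ => (x : ZMod 3)) hdet
    push_cast at this
    simpa using this
  have h2 : (c : ZMod 3) = 0 := by
    have := (ZMod.intCast_eq_intCast_iff _ _ _).mpr hc
    simpa using this
  have h3 : ((f M : ℤ) : ZMod 3) = 0 := by
    have := (ZMod.intCast_eq_intCast_iff _ _ _).mpr hf
    simpa using this
  have key : ((a : ZMod 3) = 1 ∧ (b : ZMod 3) = 0 ∧ (d : ZMod 3) = 1) ∨
      ((a : ZMod 3) = -1 ∧ (b : ZMod 3) = 0 ∧ (d : ZMod 3) = -1) := by
    unfold f at h3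
    split_ifs at h3 with ho
    · push_cast at h3
      exact keyOdd _ _ _ _ h1 h2 h3
    · push_cast at h3
      exact keyEven _ _ _ _ h1 h2 h3
  have cong : ∀ x y : ℤ, (x : ZMod 3) = (y : ZMod 3) → x ≡ y [ZMOD 3] := fun x y h =>
    (ZMod.intCast_eq_intCast_iff _ _ _).mp h
  unfold MCong
  rcases key with ⟨hA, hB, hD⟩ | ⟨hA, hB, hD⟩
  · exact Or.inl ⟨cong _ _ (by push_cast; exact hA), cong _ _ (by push_cast; exact hB),
      cong _ _ (by push_cast; exact h2), cong _ _ (by push_cast; exact hD)⟩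
  · exact Or.inr ⟨cong _ _ (by push_cast; exact hA), cong _ _ (by push_cast; exact hB),
      cong _ _ (by push_cast; exact h2), cong _ _ (by push_cast; exact hD)⟩
end

section
/- Let M = [[a,b],[c,d]] ∈ SL(2,ℤ) and define f(M) = (a+d)c - bd(c²-1) - 3c if c is odd, f(M) = (a+d)c - bd(c²-1) + 3d - 3 - 3cd if c is even. Then f(M) ≡ 0 (mod 3) if and only if M is congruent mod 3 to one of the eight matrices ±[[1,0],[0,1]], ±[[0,-1],[1,0]], ±[[1,1],[1,-1]], ±[[-1,1],[1,1]]. -/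
set_option maxRecDepth 8000 in
set_option synthInstance.maxHeartbeats 1000000 in
set_option synthInstance.maxSize 2000 in
set_option maxHeartbeats 2000000 in
lemma key (a b c d : ZMod 3) (h : a * d - b * c = 1) :
    ((a + d) * c - b * d * (c ^ 2 - 1) = 0) ↔
      (a = 1 ∧ b = 0 ∧ c = 0 ∧ d = 1) ∨ (a = -1 ∧ b = 0 ∧ c = 0 ∧ d = -1) ∨
      (a = 0 ∧ b = -1 ∧ c = 1 ∧ d = 0) ∨ (a = 0 ∧ b = 1 ∧ c = -1 ∧ d = 0) ∨
      (a = 1 ∧ b = 1 ∧ c = 1 ∧ d = -1) ∨ (a = -1 ∧ b = -1 ∧ c = -1 ∧ d = 1) ∨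
      (a = -1 ∧ b = 1 ∧ c = 1 ∧ d = 1) ∨ (a = 1 ∧ b = -1 ∧ c = -1 ∧ d = -1) := by
  revert h; revert a b c d; decide

lemma modeq3 (x y : ℤ) : x ≡ y [ZMOD 3] ↔ ((x : ZMod 3) = (y : ZMod 3)) := by
  rw [ZMod.intCast_eq_intCast_iff]; rfl

set_option maxHeartbeats 2000000 in
theorem stmt7 (M : SL2Z) :
    f M ≡ 0 [ZMOD 3] ↔
      MCong 3 M 1 0 0 1 ∨ MCong 3 M (-1) 0 0 (-1) ∨
      MCong 3 M 0 (-1) 1 0 ∨ MCong 3 M 0 1 (-1) 0 ∨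
      MCong 3 M 1 1 1 (-1) ∨ MCong 3 M (-1) (-1) (-1) 1 ∨
      MCong 3 M (-1) 1 1 1 ∨ MCong 3 M 1 (-1) (-1) (-1) := by
  have hdet : M.1 0 0 * M.1 1 1 - M.1 0 1 * M.1 1 0 = 1 := by
    have := M.2
    rwa [Matrix.det_fin_two] at this
  set a := M.1 0 0 with ha
  set b := M.1 0 1 with hb
  set c := M.1 1 0 with hc
  set d := M.1 1 1 with hd
  have hdet' : (a : ZMod 3) * d - b * c = 1 := by
    have := congrArg (Int.cast : ℤ → ZMod 3) hdet
    push_cast at this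
    exact this
  have h3 : (3 : ZMod 3) = 0 := rfl
  have hf : ((f M : ℤ) : ZMod 3) = ((a : ZMod 3) + d) * c - b * d * ((c : ZMod 3) ^ 2 - 1) := by
    unfold f
    split_ifs <;> push_cast
    · linear_combination (-(c : ZMod 3)) * h3
    · linear_combination ((d : ZMod 3) - 1 - c * d) * h3
  rw [modeq3, Int.cast_zero, hf, key _ _ _ _ hdet']
  unfold MCong
  simp only [modeq3]
  push_cast
  exact Iff.rfl
end

section
/- Define the subgroup K₃ = {M ∈ SL(2,ℤ) : f(M) ≡ 0 (mod 3)} and K₂ = {M ∈ SL(2,ℤ) : f(M) ≡ 0 (mod 2)}, where f([[a,b],[c,d]]) = (a+d)c - bd(c²-1) - 3c for c odd and (a+d)c - bd(c²-1) + 3d - 3 - 3cd for c even. With S = [[1,1],[0,1]], the six cosets Sⁿ(K₂ ∩ K₃), 0 ≤ n ≤ 5, are pairwise disjoint and their union is SL(2,ℤ); i.e., K₂ ∩ K₃ has index 6 in SL(2,ℤ). -/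
def S : SL2Z := ⟨!![1, 1; 0, 1], by norm_num [Matrix.det_fin_two_of]⟩

/-!
Left multiplication by `S` fixes the bottom row `(c, d)` of `M` and changes `f M` by
`1 + (c² - 1)(1 - d²)`. As `c` and `d` are coprime, one of them is a unit modulo 2 and one of them
is a unit modulo 3, and a unit squares to `1` modulo 2 and modulo 3; so `6 ∣ (c² - 1)(d² - 1)` and
`f (Sⁿ * N) ≡ f N + n [ZMOD 6]`: the coset of `M` is determined by `f M` modulo 6.
-/

lemma six_dvd_sq_sub_one_mul_sq_sub_one {c d : ℤ} (h : IsCoprime c d) :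
    6 ∣ (c ^ 2 - 1) * (d ^ 2 - 1) := by
  obtain ⟨u, v, huv⟩ := h
  have mod_two : ∀ u v c d : ZMod 2, u * c + v * d = 1 → (c ^ 2 - 1) * (d ^ 2 - 1) = 0 := by
    decide
  have mod_three : ∀ u v c d : ZMod 3, u * c + v * d = 1 → (c ^ 2 - 1) * (d ^ 2 - 1) = 0 := by
    decide
  have two_dvd : (2 : ℤ) ∣ (c ^ 2 - 1) * (d ^ 2 - 1) := by
    refine (ZMod.intCast_zmod_eq_zero_iff_dvd _ 2).mp ?_
    push_cast
    exact mod_two u v c d (by exact_mod_cast congrArg (Int.cast : ℤ → ZMod 2) huv)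
  have three_dvd : (3 : ℤ) ∣ (c ^ 2 - 1) * (d ^ 2 - 1) := by
    refine (ZMod.intCast_zmod_eq_zero_iff_dvd _ 3).mp ?_
    push_cast
    exact mod_three u v c d (by exact_mod_cast congrArg (Int.cast : ℤ → ZMod 3) huv)
  omega

lemma f_S_mul (M : SL2Z) :
    f (S * M) = f M + 1 - (M 1 0 ^ 2 - 1) * (M 1 1 ^ 2 - 1) := by
  have hS : (S * M : SL2Z) = !![M 0 0 + M 1 0, M 0 1 + M 1 1; M 1 0, M 1 1] := by
    rw [Matrix.SpecialLinearGroup.coe_mul]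
    ext i j
    fin_cases i <;> fin_cases j <;> simp [S, Matrix.mul_apply, Fin.sum_univ_two]
  unfold f
  simp only [hS, Matrix.of_apply, Matrix.cons_val', Matrix.cons_val_zero, Matrix.cons_val_one,
    Matrix.empty_val', Matrix.cons_val_fin_one]
  split_ifs <;> ring

lemma f_S_mul_modEq (M : SL2Z) : f (S * M) ≡ f M + 1 [ZMOD 6] := by
  rw [f_S_mul, Int.modEq_iff_dvd]
  simpa using six_dvd_sq_sub_one_mul_sq_sub_one (M.isCoprime_row 1)

lemma f_S_pow_mul_modEq (M : SL2Z) (n : ℕ) : f (S ^ n * M) ≡ f M + n [ZMOD 6] := by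
  induction n with
  | zero => simp
  | succ n ih =>
    rw [pow_succ', mul_assoc]
    calc f (S * (S ^ n * M)) ≡ f (S ^ n * M) + 1 [ZMOD 6] := f_S_mul_modEq _
      _ ≡ f M + n + 1 [ZMOD 6] := ih.add_right 1
      _ = f M + (n + 1 : ℕ) := by push_cast; ring

lemma modEq_zero_two_and_three_iff {x : ℤ} : x ≡ 0 [ZMOD 2] ∧ x ≡ 0 [ZMOD 3] ↔ x ≡ 0 [ZMOD 6] :=
  Int.modEq_and_modEq_iff_modEq_mul (by decide)

theorem stmt19 :
    (∀ M : SL2Z, ∃ n : ℕ, n ≤ 5 ∧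
      ∃ N : SL2Z, (f N ≡ 0 [ZMOD 2] ∧ f N ≡ 0 [ZMOD 3]) ∧ M = S ^ n * N) ∧
    (∀ m n : ℕ, m ≤ 5 → n ≤ 5 →
      ∀ N N' : SL2Z, (f N ≡ 0 [ZMOD 2] ∧ f N ≡ 0 [ZMOD 3]) →
        (f N' ≡ 0 [ZMOD 2] ∧ f N' ≡ 0 [ZMOD 3]) →
        S ^ m * N = S ^ n * N' → m = n) := by
  simp only [modEq_zero_two_and_three_iff]
  constructor
  · intro M
    have hn : ((f M % 6).toNat : ℤ) = f M % 6 := Int.toNat_of_nonneg (by omega)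
    refine ⟨(f M % 6).toNat, by omega, (S ^ (f M % 6).toNat)⁻¹ * M, ?_, by group⟩
    have hM := f_S_pow_mul_modEq ((S ^ (f M % 6).toNat)⁻¹ * M) (f M % 6).toNat
    rw [mul_inv_cancel_left, hn] at hM
    unfold Int.ModEq at hM ⊢
    omega
  · intro m n hm hn N N' hN hN' heq
    have hm' := f_S_pow_mul_modEq N m
    have hn' := f_S_pow_mul_modEq N' n
    rw [heq] at hm'
    unfold Int.ModEq at hm' hn' hN hN'
    omega
end
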